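/- Let β > 0 and machine energies 0 = ℰ_0 ≤ ⋯ ≤ ℰ_{d_M−1} = ℰ_max with Gibbs state τ_M = τ(β,ℰ). For every density matrix ρ on ℂ^{d_S}, the eigenvalue vector of A^n(ρ) majorizes that of A^m(ρ) whenever n ≥ m ≥ 1, and the sequence of vectors of diagonal entries of A^n(ρ) converges in ℝ^{d_S} as n → ∞. -/

import Mathlib

open Filter Topology Kronecker Matrix
open scoped ComplexOrder

/-- Sum of the `k` largest entries of a real vector (maximum of all `k`-element subset sums). -/
noncomputable def sumKLargest {ι : Type*} [Fintype ι] (v : ι → ℝ) (k : ℕ) : ℝ :=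
  sSup {x : ℝ | ∃ s : Finset ι, s.card = k ∧ ∑ i ∈ s, v i = x}

/-- `IsMajorizedBy x y` means `x ≺ y`: same total sum, and for every `k = 1,…,n` the
sum of the `k` largest entries of `x` is at most that of `y`. -/
def IsMajorizedBy {ι : Type*} [Fintype ι] (x y : ι → ℝ) : Prop :=
  (∑ i, x i = ∑ i, y i) ∧
  ∀ k : ℕ, 1 ≤ k → k ≤ Fintype.card ι → sumKLargest x k ≤ sumKLargest y k

/-- The decreasing rearrangement of a real vector. -/
noncomputable def sortDesc {n : ℕ} (v : Fin n → ℝ) : Fin n → ℝ :=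
  fun i => v (Tuple.sort v i.rev)

/-- The geometric probability vector `p*(g,d)` with entries `g^i / ∑_j g^j`. -/
noncomputable def pstar (g : ℝ) (d : ℕ) : Fin d → ℝ :=
  fun i => g ^ (i : ℕ) / ∑ j : Fin d, g ^ (j : ℕ)

/-- The Gibbs probability vector at inverse temperature `β` for energies `E`. -/
noncomputable def gibbsVec {m : ℕ} (β : ℝ) (E : Fin m → ℝ) : Fin m → ℝ :=
  fun j => Real.exp (-(β * E j)) / ∑ k : Fin m, Real.exp (-(β * E k))

/-- The Gibbs state: diagonal density matrix with the Gibbs vector on the diagonal. -/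
noncomputable def gibbsState {m : ℕ} (β : ℝ) (E : Fin m → ℝ) : Matrix (Fin m) (Fin m) ℂ :=
  Matrix.diagonal fun j => (gibbsVec β E j : ℂ)

/-- The eigenvalues of a Hermitian matrix (junk value `0` if not Hermitian). -/
noncomputable def eigVec {ι : Type*} [Fintype ι] [DecidableEq ι] (ρ : Matrix ι ι ℂ) : ι → ℝ := by
  classical exact if h : ρ.IsHermitian then h.eigenvalues else 0

/-- The eigenvalue vector of a Hermitian matrix, listed in decreasing order. -/
noncomputable def eigVecDesc {d : ℕ} (ρ : Matrix (Fin d) (Fin d) ℂ) : Fin d → ℝ :=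
  sortDesc (eigVec ρ)

/-- Partial trace over the machine: `(Tr_M X)_{s,s'} = ∑_m X_{(s,m),(s',m)}`. -/
noncomputable def ptraceM {dS dM : ℕ}
    (X : Matrix (Fin dS × Fin dM) (Fin dS × Fin dM) ℂ) : Matrix (Fin dS) (Fin dS) ℂ :=
  Matrix.of fun s s' => ∑ m : Fin dM, X (s, m) (s', m)

/-- The coherent operation `Λ_U(ρ) = Tr_M (U (ρ ⊗ τ_M) U†)` where `τ_M` is the diagonal
machine state with diagonal `τ`. -/
noncomputable def coherentOp {dS dM : ℕ} (τ : Fin dM → ℝ)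
    (U : Matrix (Fin dS × Fin dM) (Fin dS × Fin dM) ℂ)
    (ρ : Matrix (Fin dS) (Fin dS) ℂ) : Matrix (Fin dS) (Fin dS) ℂ :=
  ptraceM (U * (ρ ⊗ₖ Matrix.diagonal fun j => (τ j : ℂ)) * Uᴴ)

/-- `Λ_{U_n} ∘ ⋯ ∘ Λ_{U_1} (ρ)`: the machine is reset to its Gibbs state before each cycle. -/
noncomputable def coherentSeq {dS dM : ℕ} (τ : Fin dM → ℝ) {n : ℕ}
    (U : Fin n → Matrix (Fin dS × Fin dM) (Fin dS × Fin dM) ℂ)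
    (ρ : Matrix (Fin dS) (Fin dS) ℂ) : Matrix (Fin dS) (Fin dS) ℂ :=
  (List.ofFn U).foldl (fun σ V => coherentOp τ V σ) ρ

/-- The optimal coherent operation `A`: the diagonal matrix whose `i`-th diagonal entry is
`∑_{j<d_M} λ_{i·d_M+j}` where `λ` is the decreasing list of eigenvalues of `ρ ⊗ τ_M`. -/
noncomputable def Aopt {dS dM : ℕ} (τ : Fin dM → ℝ)
    (ρ : Matrix (Fin dS) (Fin dS) ℂ) : Matrix (Fin dS) (Fin dS) ℂ :=
  Matrix.diagonal fun i : Fin dS =>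
    ((∑ j : Fin dM,
      sortDesc
        (fun k : Fin (dS * dM) =>
          eigVec (ρ ⊗ₖ Matrix.diagonal fun l => (τ l : ℂ)) (finProdFinEquiv.symm k))
        ⟨(i : ℕ) * dM + (j : ℕ), by
          calc (i : ℕ) * dM + (j : ℕ) < (i : ℕ) * dM + dM := by
                exact Nat.add_lt_add_left j.isLt _
            _ = ((i : ℕ) + 1) * dM := by ring
            _ ≤ dS * dM := Nat.mul_le_mul_right dM i.isLt⟩ : ℝ) : ℂ)

/-- `Δ_i(p) = a·p_i − b·p_{i−1}` for `i ≥ 1` (and `0` for `i = 0`). -/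
noncomputable def delta (a b : ℝ) {d : ℕ} (p : Fin d → ℝ) (i : Fin d) : ℝ :=
  if (i : ℕ) = 0 then 0
  else a * p i - b * p ⟨(i : ℕ) - 1, Nat.lt_of_le_of_lt (Nat.sub_le _ _) i.isLt⟩

/-- The max-swap map `B`: if some `Δ_i(p) > 0`, pick an index `k̄` maximizing `Δ`,
move `Δ_{k̄}(p)` of population from level `k̄` to level `k̄−1`, and rearrange decreasingly;
otherwise `p` is left unchanged. -/
noncomputable def maxSwap (a b : ℝ) {d : ℕ} (p : Fin d → ℝ) : Fin d → ℝ := by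
  classical
  exact
    if h : ∃ k : Fin d, 0 < delta a b p k ∧ ∀ i, delta a b p i ≤ delta a b p k then
      sortDesc (fun i =>
        if i = h.choose then p h.choose - delta a b p h.choose
        else if (i : ℕ) = (h.choose : ℕ) - 1 then p i + delta a b p h.choose
        else p i)
    else p

/-! From the first step on, `A^n(ρ)` is diagonal with a decreasing vector `p_n` (the block sums
of a sorted list), so `p_n` is also its eigenvalue vector. For a diagonal state `diag p` the
eigenvalues of `diag p ⊗ τ_M` are the products `p_i τ_j`; the `k·d_M` largest of them sum to at
least `∑_{i<k} p_i ∑_j τ_j = ∑_{i<k} p_i`, and they fill exactly the first `k` blocks. Hence every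
partial sum `∑_{i<k} p_n(i)` increases with `n`. These sums are bounded by `tr ρ`, so they
converge, and so does each entry `p_n(i)`, being a difference of two consecutive partial sums. -/

section SumKLargest

variable {ι κ : Type*} [Fintype ι] [Fintype κ]

lemma le_sumKLargest (v : ι → ℝ) {s : Finset ι} {k : ℕ} (hs : s.card = k) :
    ∑ i ∈ s, v i ≤ sumKLargest v k := by
  refine le_csSup ?_ ⟨s, hs, rfl⟩
  refine (Set.finite_range fun t : Finset ι => ∑ i ∈ t, v i).subset ?_ |>.bddAbove
  rintro x ⟨t, -, rfl⟩
  exact ⟨t, rfl⟩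

lemma sumKLargest_le (v : ι → ℝ) {k : ℕ} (hk : k ≤ Fintype.card ι) {B : ℝ}
    (hB : ∀ s : Finset ι, s.card = k → ∑ i ∈ s, v i ≤ B) : sumKLargest v k ≤ B := by
  obtain ⟨t, -, ht⟩ := Finset.exists_subset_card_eq (s := (Finset.univ : Finset ι)) (by simpa)
  refine csSup_le ⟨_, t, ht, rfl⟩ ?_
  rintro x ⟨s, hs, rfl⟩
  exact hB s hs

lemma sumKLargest_le_sum (v : ι → ℝ) (hv : 0 ≤ v) {k : ℕ} (hk : k ≤ Fintype.card ι) :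
    sumKLargest v k ≤ ∑ i, v i :=
  sumKLargest_le v hk fun s _ =>
    Finset.sum_le_sum_of_subset_of_nonneg s.subset_univ fun i _ _ => hv i

lemma sumKLargest_comp_equiv (v : ι → ℝ) (e : κ ≃ ι) (k : ℕ) :
    sumKLargest (v ∘ e) k = sumKLargest v k := by
  unfold sumKLargest
  congr 1
  ext x
  constructor
  · rintro ⟨s, hs, rfl⟩
    exact ⟨s.map e.toEmbedding, by simp [hs], by simp [Finset.sum_map]⟩
  · rintro ⟨s, hs, rfl⟩
    exact ⟨s.map e.symm.toEmbedding, by simp [hs], by simp [Finset.sum_map]⟩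

lemma sumKLargest_le_sumKLargest_mul (p : ι → ℝ) (τ : κ → ℝ) (hτ : ∑ j, τ j = 1) {k : ℕ}
    (hk : k ≤ Fintype.card ι) :
    sumKLargest p k ≤ sumKLargest (fun x : ι × κ => p x.1 * τ x.2) (k * Fintype.card κ) := by
  refine sumKLargest_le p hk fun s hs => ?_
  have hcard : (s ×ˢ (Finset.univ : Finset κ)).card = k * Fintype.card κ := by
    rw [Finset.card_product, hs, Finset.card_univ]
  calc ∑ i ∈ s, p i = ∑ x ∈ s ×ˢ Finset.univ, p x.1 * τ x.2 := by
        simp [Finset.sum_product, ← Finset.mul_sum, hτ]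
    _ ≤ _ := le_sumKLargest _ hcard

end SumKLargest

lemma Fin.val_le_of_strictMono {k d : ℕ} {f : Fin k → Fin d} (hf : StrictMono f) (j : Fin k) :
    (j : ℕ) ≤ f j := by
  obtain ⟨k, rfl⟩ := Nat.exists_eq_add_one_of_ne_zero j.pos.ne'
  induction j using Fin.induction with
  | zero => exact Nat.zero_le _
  | succ j ih =>
    have : (f j.castSucc : ℕ) < f j.succ := hf j.castSucc_lt_succ
    simp only [Fin.val_succ, Fin.val_castSucc] at ih ⊢
    omega

lemma sum_le_sum_castLE_of_antitone {d k : ℕ} (hk : k ≤ d) {v : Fin d → ℝ} (hv : Antitone v)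
    (s : Finset (Fin d)) (hs : s.card = k) :
    ∑ i ∈ s, v i ≤ ∑ j : Fin k, v (Fin.castLE hk j) := by
  rw [← s.map_orderEmbOfFin_univ hs, Finset.sum_map]
  exact Finset.sum_le_sum fun j _ =>
    hv (Fin.le_def.2 (Fin.val_le_of_strictMono (s.orderEmbOfFin hs).strictMono j))

lemma sumKLargest_of_antitone {d k : ℕ} (hk : k ≤ d) {v : Fin d → ℝ} (hv : Antitone v) :
    sumKLargest v k = ∑ j : Fin k, v (Fin.castLE hk j) := by
  apply le_antisymm (sumKLargest_le v (by simpa using hk) (sum_le_sum_castLE_of_antitone hk hv))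
  have := le_sumKLargest v (s := Finset.univ.map (Fin.castLEEmb hk)) (k := k) (by simp)
  rwa [Finset.sum_map] at this

lemma sumKLargest_succ_sub_of_antitone {d : ℕ} {v : Fin d → ℝ} (hv : Antitone v) (i : Fin d) :
    sumKLargest v (i + 1) - sumKLargest v i = v i := by
  rw [sumKLargest_of_antitone i.isLt hv, sumKLargest_of_antitone i.isLt.le hv,
    Fin.sum_univ_castSucc]
  simp only [Fin.castLE_castSucc, add_sub_cancel_left]
  congr 1

lemma exists_tendsto_of_monotone_sumKLargest {d : ℕ} {u : ℕ → Fin d → ℝ}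
    (hu : ∀ n, Antitone (u n)) (hmono : ∀ k ≤ d, Monotone fun n => sumKLargest (u n) k)
    (hbdd : ∀ k ≤ d, BddAbove (Set.range fun n => sumKLargest (u n) k)) :
    ∃ L, Tendsto u atTop (𝓝 L) := by
  have hconv : ∀ k ≤ d, ∃ l, Tendsto (fun n => sumKLargest (u n) k) atTop (𝓝 l) :=
    fun k hk => ⟨_, tendsto_atTop_ciSup (hmono k hk) (hbdd k hk)⟩
  choose l hl using hconv
  refine ⟨fun i => l (i + 1) i.isLt - l i i.isLt.le, tendsto_pi_nhds.2 fun i => ?_⟩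
  refine ((hl _ i.isLt).sub (hl _ i.isLt.le)).congr fun n => ?_
  exact sumKLargest_succ_sub_of_antitone (hu n) i

lemma sortDesc_antitone {n : ℕ} (v : Fin n → ℝ) : Antitone (sortDesc v) :=
  fun _ _ hab => Tuple.monotone_sort v (Fin.rev_le_rev.2 hab)

lemma sumKLargest_sortDesc {n : ℕ} (v : Fin n → ℝ) (k : ℕ) :
    sumKLargest (sortDesc v) k = sumKLargest v k :=
  sumKLargest_comp_equiv v (Fin.revPerm.trans (Tuple.sort v)) k

lemma sum_sortDesc {n : ℕ} (v : Fin n → ℝ) : ∑ i, sortDesc v i = ∑ i, v i :=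
  (Fin.revPerm.trans (Tuple.sort v)).sum_comp v

lemma sortDesc_comp_perm_of_antitone {n : ℕ} {p : Fin n → ℝ} (hp : Antitone p)
    (e : Equiv.Perm (Fin n)) : sortDesc (p ∘ e) = p := by
  have hsort : Monotone (p ∘ ((Tuple.sort (p ∘ e)).trans e)) := Tuple.monotone_sort (p ∘ e)
  have hrev : Monotone (p ∘ Fin.revPerm) := fun _ _ hab => hp (Fin.rev_le_rev.2 hab)
  funext i
  simpa [sortDesc] using congrFun (Tuple.unique_monotone hsort hrev) i.rev

lemma exists_perm_eq_comp_of_map_eq {ι α : Type*} [Fintype ι] {f g : ι → α}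
    (h : Multiset.map f Finset.univ.val = Multiset.map g Finset.univ.val) :
    ∃ e : Equiv.Perm ι, f = g ∘ e := by
  classical
  have hfiber (c : α) : Fintype.card {a // f a = c} = Fintype.card {b // g b = c} := by
    simpa [Fintype.card_subtype, Multiset.count_map, Finset.filter, eq_comm] using
      congrArg (Multiset.count c) h
  let e := Equiv.ofFiberEquiv fun c => Fintype.equivOfCardEq (hfiber c)
  exact ⟨e, funext fun a => (Equiv.ofFiberEquiv_map _ a).symm⟩

section Eigenvalues

variable {ι : Type*} [Fintype ι] [DecidableEq ι]

lemma eigVec_of_isHermitian {A : Matrix ι ι ℂ} (hA : A.IsHermitian) : eigVec A = hA.eigenvalues :=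
  dif_pos hA

lemma eigVec_nonneg {A : Matrix ι ι ℂ} (hA : A.PosSemidef) : 0 ≤ eigVec A := by
  rw [eigVec_of_isHermitian hA.isHermitian]
  exact hA.eigenvalues_nonneg

lemma sum_eigVec {A : Matrix ι ι ℂ} (hA : A.IsHermitian) :
    ((∑ i, eigVec A i : ℝ) : ℂ) = A.trace := by
  rw [hA.trace_eq_sum_eigenvalues, eigVec_of_isHermitian hA, Complex.ofReal_sum]
  rfl

lemma exists_eigVec_diagonal_eq_comp (w : ι → ℝ) :
    ∃ e : Equiv.Perm ι, eigVec (diagonal fun i => (w i : ℂ)) = w ∘ e := by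
  have hA : (diagonal fun i => (w i : ℂ)).IsHermitian :=
    isHermitian_diagonal_iff.2 fun i => Complex.conj_ofReal (w i)
  have hroots := hA.roots_charpoly_eq_eigenvalues
  rw [charpoly_diagonal, Polynomial.roots_prod _ _ (by simp [Finset.prod_ne_zero_iff,
    Polynomial.X_sub_C_ne_zero])] at hroots
  rw [eigVec_of_isHermitian hA]
  refine exists_perm_eq_comp_of_map_eq
    (Multiset.map_injective (f := ((↑) : ℝ → ℂ)) Complex.ofReal_injective ?_)
  simpa [Multiset.map_map] using hroots.symm

lemma eigVecDesc_diagonal {d : ℕ} {v : Fin d → ℝ} (hv : Antitone v) :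
    eigVecDesc (diagonal fun i => (v i : ℂ)) = v := by
  obtain ⟨e, he⟩ := exists_eigVec_diagonal_eq_comp v
  rw [eigVecDesc, he, sortDesc_comp_perm_of_antitone hv]

end Eigenvalues

section BlockSum

variable {m n : ℕ}

lemma block_index_lt (i : Fin m) (j : Fin n) : (i : ℕ) * n + j < m * n :=
  calc (i : ℕ) * n + j < (i + 1) * n := by rw [add_one_mul]; exact Nat.add_lt_add_left j.isLt _
    _ ≤ m * n := Nat.mul_le_mul_right n i.isLt

def blockSum (w : Fin (m * n) → ℝ) (i : Fin m) : ℝ :=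
  ∑ j : Fin n, w ⟨i * n + j, block_index_lt i j⟩

lemma block_index_eq_finProdFinEquiv (i : Fin m) (j : Fin n) :
    (⟨i * n + j, block_index_lt i j⟩ : Fin (m * n)) = finProdFinEquiv (i, j) :=
  Fin.ext (by rw [finProdFinEquiv_apply_val]; ring)

lemma sum_blockSum (w : Fin (m * n) → ℝ) : ∑ i, blockSum w i = ∑ t, w t := by
  simp only [blockSum, block_index_eq_finProdFinEquiv, ← Fintype.sum_prod_type']
  exact finProdFinEquiv.sum_comp w

lemma blockSum_nonneg {w : Fin (m * n) → ℝ} (hw : 0 ≤ w) : 0 ≤ blockSum w :=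
  fun _ => Finset.sum_nonneg fun _ _ => hw _

lemma blockSum_antitone {w : Fin (m * n) → ℝ} (hw : Antitone w) : Antitone (blockSum w) :=
  fun _ _ hab => Finset.sum_le_sum fun _ _ =>
    hw (Fin.le_def.2 (Nat.add_le_add_right (Nat.mul_le_mul_right n hab) _))

lemma sumKLargest_le_sumKLargest_blockSum {w : Fin (m * n) → ℝ} (hw : Antitone w) {k : ℕ}
    (hk : k ≤ m) : sumKLargest w (k * n) ≤ sumKLargest (blockSum w) k := by
  have hkn : k * n ≤ m * n := Nat.mul_le_mul_right n hk
  have hprefix : ∑ t : Fin (k * n), w (Fin.castLE hkn t)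
      = ∑ i ∈ Finset.univ.map (Fin.castLEEmb hk), blockSum w i := by
    rw [Finset.sum_map, ← finProdFinEquiv.sum_comp, Fintype.sum_prod_type]
    refine Finset.sum_congr rfl fun i _ => Finset.sum_congr rfl fun j _ => congrArg w ?_
    exact Fin.ext (by simp [finProdFinEquiv_apply_val]; ring)
  rw [sumKLargest_of_antitone hkn hw, hprefix]
  exact le_sumKLargest _ (by simp)

end BlockSum

section OptimalCoherentOperation

variable {dS dM : ℕ}

noncomputable def kronEigVec (τ : Fin dM → ℝ) (σ : Matrix (Fin dS) (Fin dS) ℂ) :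
    Fin (dS * dM) → ℝ :=
  fun k => eigVec (σ ⊗ₖ diagonal fun l => (τ l : ℂ)) (finProdFinEquiv.symm k)

noncomputable def aoptVec (τ : Fin dM → ℝ) (σ : Matrix (Fin dS) (Fin dS) ℂ) : Fin dS → ℝ :=
  blockSum (sortDesc (kronEigVec τ σ))

lemma Aopt_eq_diagonal (τ : Fin dM → ℝ) (σ : Matrix (Fin dS) (Fin dS) ℂ) :
    Aopt τ σ = diagonal fun i => (aoptVec τ σ i : ℂ) :=
  rfl

lemma aoptVec_antitone (τ : Fin dM → ℝ) (σ : Matrix (Fin dS) (Fin dS) ℂ) :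
    Antitone (aoptVec τ σ) :=
  blockSum_antitone (sortDesc_antitone _)

lemma aoptVec_nonneg {τ : Fin dM → ℝ} (hτ : 0 ≤ τ) {σ : Matrix (Fin dS) (Fin dS) ℂ}
    (hσ : σ.PosSemidef) : 0 ≤ aoptVec τ σ := by
  have hD : (diagonal fun l => (τ l : ℂ)).PosSemidef :=
    posSemidef_diagonal_iff.2 fun l => by exact_mod_cast hτ l
  exact blockSum_nonneg fun t => eigVec_nonneg (hσ.kronecker hD) _

lemma posSemidef_Aopt {τ : Fin dM → ℝ} (hτ : 0 ≤ τ) {σ : Matrix (Fin dS) (Fin dS) ℂ}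
    (hσ : σ.PosSemidef) : (Aopt τ σ).PosSemidef := by
  rw [Aopt_eq_diagonal, posSemidef_diagonal_iff]
  exact fun i => by exact_mod_cast aoptVec_nonneg hτ hσ i

lemma trace_Aopt {τ : Fin dM → ℝ} (hτ : ∑ j, τ j = 1) {σ : Matrix (Fin dS) (Fin dS) ℂ}
    (hσ : σ.IsHermitian) : (Aopt τ σ).trace = σ.trace := by
  have hD : (diagonal fun l => (τ l : ℂ)).IsHermitian :=
    isHermitian_diagonal_iff.2 fun l => Complex.conj_ofReal (τ l)
  have hK : (σ ⊗ₖ diagonal fun l => (τ l : ℂ)).IsHermitian := by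
    rw [IsHermitian, conjTranspose_kronecker, hσ.eq, hD.eq]
  rw [Aopt_eq_diagonal, trace_diagonal, ← Complex.ofReal_sum, aoptVec, sum_blockSum,
    sum_sortDesc]
  unfold kronEigVec
  rw [finProdFinEquiv.symm.sum_comp, sum_eigVec hK,
    trace_kronecker, trace_diagonal, ← Complex.ofReal_sum, hτ, Complex.ofReal_one, mul_one]

lemma posSemidef_iterate_Aopt {τ : Fin dM → ℝ} (hτ : 0 ≤ τ) {σ : Matrix (Fin dS) (Fin dS) ℂ}
    (hσ : σ.PosSemidef) (n : ℕ) : ((Aopt τ)^[n] σ).PosSemidef :=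
  Function.Iterate.rec _ hσ (fun _ => posSemidef_Aopt hτ) n

lemma trace_iterate_Aopt {τ : Fin dM → ℝ} (hτ0 : 0 ≤ τ) (hτ1 : ∑ j, τ j = 1)
    {σ : Matrix (Fin dS) (Fin dS) ℂ} (hσ : σ.PosSemidef) (n : ℕ) :
    ((Aopt τ)^[n] σ).trace = σ.trace := by
  induction n with
  | zero => rfl
  | succ n ih =>
    rw [Function.iterate_succ_apply',
      trace_Aopt hτ1 (posSemidef_iterate_Aopt hτ0 hσ n).isHermitian, ih]

lemma sumKLargest_le_sumKLargest_aoptVec {τ : Fin dM → ℝ} (hτ : ∑ j, τ j = 1) (p : Fin dS → ℝ)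
    {k : ℕ} (hk : k ≤ dS) :
    sumKLargest p k ≤ sumKLargest (aoptVec τ (diagonal fun i => (p i : ℂ))) k := by
  obtain ⟨e, he⟩ := exists_eigVec_diagonal_eq_comp fun x : Fin dS × Fin dM => p x.1 * τ x.2
  have hkron : kronEigVec τ (diagonal fun i => (p i : ℂ))
      = (fun x : Fin dS × Fin dM => p x.1 * τ x.2) ∘ e ∘ finProdFinEquiv.symm := by
    have hdiag : (diagonal fun i => (p i : ℂ)) ⊗ₖ (diagonal fun l => (τ l : ℂ))
        = diagonal fun x : Fin dS × Fin dM => ((p x.1 * τ x.2 : ℝ) : ℂ) := by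
      rw [diagonal_kronecker_diagonal]
      simp only [Complex.ofReal_mul]
    funext t
    simp only [kronEigVec, hdiag, he, Function.comp_apply]
  calc sumKLargest p k
      ≤ sumKLargest (fun x : Fin dS × Fin dM => p x.1 * τ x.2) (k * dM) := by
        simpa using sumKLargest_le_sumKLargest_mul p τ hτ (k := k) (by simpa using hk)
    _ = sumKLargest (sortDesc (kronEigVec τ (diagonal fun i => (p i : ℂ)))) (k * dM) := by
        rw [sumKLargest_sortDesc, hkron, ← Function.comp_assoc, sumKLargest_comp_equiv,
          sumKLargest_comp_equiv]
    _ ≤ _ := sumKLargest_le_sumKLargest_blockSum (sortDesc_antitone _) hk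

end OptimalCoherentOperation

lemma gibbsVec_nonneg {m : ℕ} (β : ℝ) (E : Fin m → ℝ) : 0 ≤ gibbsVec β E :=
  fun _ => div_nonneg (Real.exp_pos _).le (Finset.sum_nonneg fun _ _ => (Real.exp_pos _).le)

lemma sum_gibbsVec {m : ℕ} (hm : 0 < m) (β : ℝ) (E : Fin m → ℝ) : ∑ j, gibbsVec β E j = 1 := by
  have : Nonempty (Fin m) := ⟨⟨0, hm⟩⟩
  simp only [gibbsVec]
  rw [← Finset.sum_div,
    div_self (Finset.sum_pos (fun _ _ => Real.exp_pos _) Finset.univ_nonempty).ne']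

theorem optimal_protocol_converges_general {dS dM : ℕ} (hdM : 0 < dM)
    (β : ℝ) (E : Fin dM → ℝ)
    (ρ : Matrix (Fin dS) (Fin dS) ℂ) (hρ : ρ.PosSemidef) :
    (∀ m n : ℕ, 1 ≤ m → m ≤ n →
      IsMajorizedBy (eigVecDesc ((Aopt (gibbsVec β E))^[m] ρ))
        (eigVecDesc ((Aopt (gibbsVec β E))^[n] ρ))) ∧
    ∃ L : Fin dS → ℝ,
      Filter.Tendsto (fun n : ℕ => fun i : Fin dS => (((Aopt (gibbsVec β E))^[n] ρ) i i).re)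
        Filter.atTop (nhds L) := by
  set τ := gibbsVec β E
  have hτ0 : 0 ≤ τ := gibbsVec_nonneg β E
  have hτ1 : ∑ j, τ j = 1 := sum_gibbsVec hdM β E
  set v : ℕ → Fin dS → ℝ := fun n => aoptVec τ ((Aopt τ)^[n] ρ)
  have hiter (n : ℕ) : (Aopt τ)^[n + 1] ρ = diagonal fun i => (v n i : ℂ) := by
    rw [Function.iterate_succ_apply', Aopt_eq_diagonal]
  have hmono (k : ℕ) (hk : k ≤ dS) : Monotone fun n => sumKLargest (v n) k :=
    monotone_nat_of_le_succ fun n => by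
      simpa only [v, hiter] using sumKLargest_le_sumKLargest_aoptVec hτ1 (v n) hk
  have hsum (n : ℕ) : ∑ i, v n i = ρ.trace.re := by
    simp [← trace_iterate_Aopt hτ0 hτ1 hρ (n + 1), hiter, trace_diagonal]
  refine ⟨fun m n hm hmn => ?_, ?_⟩
  · obtain ⟨m, rfl⟩ := Nat.exists_eq_add_one_of_ne_zero (by omega : m ≠ 0)
    obtain ⟨n, rfl⟩ := Nat.exists_eq_add_one_of_ne_zero (by omega : n ≠ 0)
    rw [hiter, hiter, eigVecDesc_diagonal (aoptVec_antitone _ _),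
      eigVecDesc_diagonal (aoptVec_antitone _ _)]
    exact ⟨by rw [hsum, hsum], fun k _ hk => hmono k (by simpa using hk) (by omega)⟩
  · have hbdd (k : ℕ) (hk : k ≤ dS) : BddAbove (Set.range fun n => sumKLargest (v n) k) := by
      refine ⟨ρ.trace.re, ?_⟩
      rintro _ ⟨n, rfl⟩
      rw [← hsum n]
      exact sumKLargest_le_sum _ (aoptVec_nonneg hτ0 (posSemidef_iterate_Aopt hτ0 hρ n)) (by simpa)
    obtain ⟨L, hL⟩ :=
      exists_tendsto_of_monotone_sumKLargest (fun n => aoptVec_antitone _ _) hmono hbdd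
    refine ⟨L, (Filter.tendsto_add_atTop_iff_nat 1).1 ?_⟩
    simpa [hiter] using hL

/-- Monotonicity and convergence of the optimal coherent protocol:
`A^n(ρ)` majorizes `A^m(ρ)` for `n ≥ m ≥ 1`, and the vectors of diagonal entries of
`A^n(ρ)` converge as `n → ∞`. -/
theorem optimal_protocol_converges {dS dM : ℕ} (hdM : 0 < dM)
    (β : ℝ) (hβ : 0 < β)
    (E : Fin dM → ℝ) (hmono : Monotone E) (hE0 : E ⟨0, hdM⟩ = 0)
    (ρ : Matrix (Fin dS) (Fin dS) ℂ) (hρ : ρ.PosSemidef) (hρtr : ρ.trace = 1) :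
    (∀ m n : ℕ, 1 ≤ m → m ≤ n →
      IsMajorizedBy (eigVecDesc ((Aopt (gibbsVec β E))^[m] ρ))
        (eigVecDesc ((Aopt (gibbsVec β E))^[n] ρ))) ∧
    ∃ L : Fin dS → ℝ,
      Filter.Tendsto (fun n : ℕ => fun i : Fin dS => (((Aopt (gibbsVec β E))^[n] ρ) i i).re)
        Filter.atTop (nhds L) :=
  optimal_protocol_converges_general hdM β E ρ hρ
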